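/- arXiv:2210.09703 — 3 statements merged into one kernel-verified Lean document; each statement's English description precedes it below -/
import Mathlib

section
/- Let G = (V, E) be a finite directed graph with n = |V| vertices and m = |E| edges, where m ≥ n ≥ 1, and let D_G be the automaton constructed from G. Then G has a Hamiltonian cycle if and only if D_G admits a monotone decomposition with n + m + 1 sets. -/
set_option autoImplicit false

namespace RegularMemory

/-- Concatenation of a finite word with an infinite word. -/
def wcat {C : Type} (w : List C) (x : ℕ → C) : ℕ → C := fun n =>
  if h : n < w.length then w.get ⟨n, h⟩ else x (n - w.length)

/-- The infinite word `w^ω` (junk value if `w` is empty). -/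
noncomputable def wpow {C : Type} [Nonempty C] : List C → ℕ → C
  | [] => fun _ => Classical.arbitrary C
  | (a :: l) => fun n => (a :: l).get ⟨n % (a :: l).length, Nat.mod_lt n (Nat.succ_pos _)⟩

/-- Winning continuations `w⁻¹W` of the finite word `w` for the objective `W`. -/
def contAfter {C : Type} (W : Set (ℕ → C)) (w : List C) : Set (ℕ → C) :=
  {x | wcat w x ∈ W}

/-- Prefix preorder `w₁ ⪯_W w₂`. -/
def prefLe {C : Type} (W : Set (ℕ → C)) (w₁ w₂ : List C) : Prop :=
  contAfter W w₁ ⊆ contAfter W w₂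

/-- Strict prefix relation `w₁ ≺_W w₂`. -/
def prefLt {C : Type} (W : Set (ℕ → C)) (w₁ w₂ : List C) : Prop :=
  prefLe W w₁ w₂ ∧ ¬ prefLe W w₂ w₁

/-- Comparability for the prefix preorder. -/
def PrefComparable {C : Type} (W : Set (ℕ → C)) (w₁ w₂ : List C) : Prop :=
  prefLe W w₁ w₂ ∨ prefLe W w₂ w₁

/-- The general reachability objective derived from `A`: infinite words with a prefix in `A`. -/
def ReachObj {C : Type} (A : Set (List C)) : Set (ℕ → C) :=
  {x | ∃ n : ℕ, (List.ofFn fun i : Fin n => x i) ∈ A}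

/-- The general safety objective derived from `A`. -/
def SafeObj {C : Type} (A : Set (List C)) : Set (ℕ → C) :=
  (ReachObj A)ᶜ

/-- The prefix preorder of `W` has finitely many equivalence classes. -/
def FinClasses {C : Type} (W : Set (ℕ → C)) : Prop :=
  (Set.range fun w : List C => contAfter W w).Finite

/-- The prefix preorder of `W` is well-founded:
every nonempty chain contains a minimal element. -/
def PrefWellFounded {C : Type} (W : Set (ℕ → C)) : Prop :=
  ∀ S : Set (List C), S.Nonempty →
    (∀ w₁ ∈ S, ∀ w₂ ∈ S, PrefComparable W w₁ w₂) →
    ∃ w₀ ∈ S, ∀ w ∈ S, ¬ prefLt W w w₀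

/-- Chromatic memory structure. -/
structure MemStruct (C : Type) where
  M : Type
  init : M
  upd : M → C → M

/-- Extension of the update function to finite words. -/
def MemStruct.updStar {C : Type} (N : MemStruct C) (m : N.M) (w : List C) : N.M :=
  w.foldl N.upd m

/-- The trivial one-state memory structure. -/
def trivMem (C : Type) : MemStruct C :=
  ⟨Unit, (), fun _ _ => ()⟩

/-- `W` is `N`-strongly-monotone. -/
def StronglyMonotone {C : Type} (N : MemStruct C) (W : Set (ℕ → C)) : Prop :=
  ∀ w₁ w₂ : List C,
    N.updStar N.init w₁ = N.updStar N.init w₂ → PrefComparable W w₁ w₂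

/-- `W` is `N`-progress-consistent. -/
def ProgressConsistent {C : Type} [Nonempty C] (N : MemStruct C) (W : Set (ℕ → C)) : Prop :=
  ∀ (m : N.M) (w₁ w₂ : List C),
    N.updStar N.init w₁ = m → N.updStar m w₂ = m →
    prefLt W w₁ (w₁ ++ w₂) → wcat w₁ (wpow w₂) ∈ W

/-- Two-player arena with colored edges; Player-1 vertices have outgoing edges
(so that strategies of Player 1 exist). -/
structure Arena (C : Type) where
  V : Type
  P1 : V → Prop
  E : Set (V × C × V)
  succ : ∀ v : V, P1 v → ∃ e ∈ E, e.1 = v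

namespace Arena

/-- Valid histories starting at a given vertex. -/
def HistFrom {C : Type} (A : Arena C) : A.V → List (A.V × C × A.V) → Prop
  | _, [] => True
  | v, e :: l => e ∈ A.E ∧ e.1 = v ∧ HistFrom A e.2.2 l

/-- Endpoint of a history. -/
def endFrom {C : Type} (A : Arena C) : A.V → List (A.V × C × A.V) → A.V
  | v, [] => v
  | _, e :: l => endFrom A e.2.2 l

/-- Infinite plays from a vertex. -/
def PlayFrom {C : Type} (A : Arena C) (v : A.V) (π : ℕ → A.V × C × A.V) : Prop :=
  (π 0).1 = v ∧ ∀ n : ℕ, π n ∈ A.E ∧ (π n).2.2 = (π (n + 1)).1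

/-- Colors along a play. -/
def playCol {C V : Type} (π : ℕ → V × C × V) : ℕ → C :=
  fun n => (π n).2.1

/-- Strategies of Player 1: on every valid history ending in a Player-1 vertex,
the strategy picks an edge leaving that vertex. -/
structure Strategy {C : Type} (A : Arena C) where
  next : A.V → List (A.V × C × A.V) → A.V × C × A.V
  legal : ∀ (v : A.V) (l : List (A.V × C × A.V)),
    A.HistFrom v l → A.P1 (A.endFrom v l) →
      next v l ∈ A.E ∧ (next v l).1 = A.endFrom v l

/-- A play from `v` is consistent with the strategy `σ`. -/
def Strategy.Consistent {C : Type} {A : Arena C} (σ : A.Strategy) (v : A.V)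
    (π : ℕ → A.V × C × A.V) : Prop :=
  ∀ n : ℕ, A.P1 (A.endFrom v (List.ofFn fun i : Fin n => π i)) →
    π n = σ.next v (List.ofFn fun i : Fin n => π i)

/-- `σ` is winning from `v` for the objective `W`. -/
def Strategy.WinningFrom {C : Type} {A : Arena C} (σ : A.Strategy)
    (W : Set (ℕ → C)) (v : A.V) : Prop :=
  ∀ π : ℕ → A.V × C × A.V, A.PlayFrom v π → σ.Consistent v π → playCol π ∈ W

/-- `σ` is optimal in `(A, W)`: winning from every vertex from which
Player 1 has some winning strategy. -/
def Strategy.Optimal {C : Type} {A : Arena C} (σ : A.Strategy) (W : Set (ℕ → C)) : Prop :=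
  ∀ v : A.V, (∃ σ' : A.Strategy, σ'.WinningFrom W v) → σ.WinningFrom W v

/-- `σ` is based on the memory structure `N`. -/
def Strategy.BasedOn {C : Type} {A : Arena C} (σ : A.Strategy) (N : MemStruct C) : Prop :=
  ∃ nxt : A.V → N.M → A.V × C × A.V,
    ∀ (v : A.V) (l : List (A.V × C × A.V)),
      A.HistFrom v l → A.P1 (A.endFrom v l) →
        σ.next v l = nxt (A.endFrom v l) (N.updStar N.init (l.map fun e => e.2.1))

/-- Finite arena: finitely many vertices and edges. -/
def IsFinite {C : Type} (A : Arena C) : Prop := Finite A.V ∧ A.E.Finite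

/-- Finitely branching arena. -/
def FinBranching {C : Type} (A : Arena C) : Prop :=
  ∀ v : A.V, {e ∈ A.E | e.1 = v}.Finite

/-- One-player arena of Player 1. -/
def OneP1 {C : Type} (A : Arena C) : Prop := ∀ v : A.V, A.P1 v

end Arena

/-- `N` suffices to play optimally for `W` in all arenas of the class `P`. -/
def SufficesIn {C : Type} (N : MemStruct C) (W : Set (ℕ → C))
    (P : Arena C → Prop) : Prop :=
  ∀ A : Arena C, P A → ∃ σ : A.Strategy, σ.BasedOn N ∧ σ.Optimal W

/-- Deterministic automaton (with complete transition function). -/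
structure DetAuto (C : Type) where
  Q : Type
  init : Q
  δ : Q → C → Q
  F : Set Q

/-- Extension of the transition function to finite words. -/
def DetAuto.δStar {C : Type} (D : DetAuto C) (q : D.Q) (w : List C) : D.Q :=
  w.foldl D.δ q

/-- Language recognized by `D`. -/
def DetAuto.lang {C : Type} (D : DetAuto C) : Set (List C) :=
  {w | D.δStar D.init w ∈ D.F}

/-- Prefix preorder extended to automaton states. -/
def statePrefLe {C : Type} (D : DetAuto C) (W : Set (ℕ → C)) (q₁ q₂ : D.Q) : Prop :=
  ∀ w₁ w₂ : List C,
    D.δStar D.init w₁ = q₁ → D.δStar D.init w₂ = q₂ → prefLe W w₁ w₂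

def statePrefLt {C : Type} (D : DetAuto C) (W : Set (ℕ → C)) (q₁ q₂ : D.Q) : Prop :=
  statePrefLe D W q₁ q₂ ∧ ¬ statePrefLe D W q₂ q₁

def StateComparable {C : Type} (D : DetAuto C) (W : Set (ℕ → C)) (q₁ q₂ : D.Q) : Prop :=
  statePrefLe D W q₁ q₂ ∨ statePrefLe D W q₂ q₁

/-- Monotone decomposition of `D` with `k` sets. -/
def MonotoneDecomposition {C : Type} (D : DetAuto C) (W : Set (ℕ → C))
    {k : ℕ} (Γ : Fin k → Set D.Q) : Prop :=
  (∀ q : D.Q, ∃ i : Fin k, q ∈ Γ i) ∧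
  (∀ (c : C) (i : Fin k), ∃ j : Fin k, (fun q => D.δ q c) '' Γ i ⊆ Γ j) ∧
  (∀ i : Fin k, ∀ q₁ ∈ Γ i, ∀ q₂ ∈ Γ i, StateComparable D W q₁ q₂)

end RegularMemory

namespace RegularMemory

/-- Vertex and edge states coming from the cycle graph `C_n` (`vc`, `ec`)
and from the graph `G` (`vg`, `eg`). -/
inductive ZKind (n : ℕ) (Ed : Finset (Fin n × Fin n)) : Type
  | vc (i : Fin n)
  | ec (i : Fin n)
  | vg (v : Fin n)
  | eg (e : Fin n × Fin n) (he : e ∈ Ed)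

/-- States of the automaton `D_G`. -/
inductive DGState (n : ℕ) (Ed : Finset (Fin n × Fin n)) : Type
  | base (z : ZKind n Ed)
  | qinit
  | bot
  | top

/-- Alphabet of the automaton `D_G`: letters `in`, `out`, and one letter `a_z`
for each vertex/edge state `z`. -/
inductive DGAlpha (n : ℕ) (Ed : Finset (Fin n × Fin n)) : Type
  | inL
  | outL
  | az (z : ZKind n Ed)

instance (n : ℕ) (Ed : Finset (Fin n × Fin n)) : Nonempty (DGAlpha n Ed) :=
  ⟨DGAlpha.inL⟩

/-- Cyclic successor in `Fin n`. -/
def finSucc {n : ℕ} (i : Fin n) : Fin n :=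
  ⟨(i.val + 1) % n, Nat.mod_lt _ i.pos⟩

/-- Target of the transition reading letter `a_{z'}` from the state `z`. -/
def azTarget {n : ℕ} {Ed : Finset (Fin n × Fin n)} (z z' : ZKind n Ed) : DGState n Ed :=
  match z, z' with
  | .vc i, .vc j => if i = j then .top else .bot
  | .ec i, .ec j => if i = j then .top else .bot
  | .vg v, .vg w => if v = w then .top else .bot
  | .vg _, .vc _ => .top
  | .eg e _, .eg e' _ => if e = e' then .top else .bot
  | .eg _ _, .ec _ => .top
  | _, _ => .bot

/-- Transition function of the automaton `D_G`. -/
def DGdelta {n : ℕ} {Ed : Finset (Fin n × Fin n)} :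
    DGState n Ed → DGAlpha n Ed → DGState n Ed
  | .base (.vc i), .inL => .base (.vc i)
  | .base (.vc i), .outL => .base (.vc i)
  | .base (.ec i), .inL => .base (.vc i)
  | .base (.ec i), .outL => .base (.vc (finSucc i))
  | .base (.vg v), .inL => .base (.vg v)
  | .base (.vg v), .outL => .base (.vg v)
  | .base (.eg e _), .inL => .base (.vg e.1)
  | .base (.eg e _), .outL => .base (.vg e.2)
  | .base z, .az z' => azTarget z z'
  | .qinit, .inL => .qinit
  | .qinit, .outL => .qinit
  | .qinit, .az z => .base z
  | .bot, _ => .bot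
  | .top, _ => .top

/-- The automaton `D_G` built from the graph `G = (Fin n, Ed)`. -/
def DG (n : ℕ) (Ed : Finset (Fin n × Fin n)) : DetAuto (DGAlpha n Ed) where
  Q := DGState n Ed
  init := DGState.qinit
  δ := DGdelta
  F := {DGState.top}

/-- `G = (Fin n, Ed)` has a Hamiltonian cycle. -/
def HasHamiltonianCycle (n : ℕ) (Ed : Finset (Fin n × Fin n)) : Prop :=
  ∃ u : Fin n → Fin n, Function.Bijective u ∧ ∀ i : Fin n, (u i, u (finSucc i)) ∈ Ed

end RegularMemory

/-!
For the reachability objective of `D_G`, `q₁ ⪯ q₂` says that every word leading `q₁` to `⊤`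
leads `q₂` to `⊤`. Hence `⊥` and `⊤` are comparable with everything, `v_a^C ⪯ v` and
`e_j^C ⪯ e`, while the letters `a_z` separate almost all other pairs. In particular the
`n + m + 1` states `v_a^C`, `e ∈ E` and `q_init` are pairwise incomparable, so in a monotone
decomposition into `n + m + 1` chains every chain holds exactly one of them. Every vertex of `G`
then lies on the chain of some `v_a^C`, and distinct vertices on distinct chains, which defines a
bijection `a ↦ u a`; the chain of `e_j^C` is that of some edge `e`, and closure under `in` and
`out` forces
`e = (u j, u (j + 1))`, so `u` is a Hamiltonian cycle. Conversely, a Hamiltonian cycle `u` yields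
the chains `{⊥, ⊤, v_a^C, u a}`, `{⊥, ⊤, e} ∪ {e_j^C | e = (u j, u (j + 1))}` and
`{⊥, ⊤, q_init}`.
-/

namespace RegularMemory

section Wcat

variable {C : Type}

lemma wcat_nil (x : ℕ → C) : wcat [] x = x := by
  funext k
  simp [wcat]

lemma wcat_cons_zero (a : C) (w : List C) (x : ℕ → C) : wcat (a :: w) x 0 = a := by
  simp [wcat]

lemma wcat_cons_succ (a : C) (w : List C) (x : ℕ → C) :
    (fun k => wcat (a :: w) x (k + 1)) = wcat w x := by
  funext k
  by_cases h : k < w.length <;> simp [wcat, h]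

end Wcat

namespace DetAuto

variable {C : Type} (D : DetAuto C)

lemma δStar_nil (q : D.Q) : D.δStar q [] = q := rfl

lemma δStar_cons (q : D.Q) (c : C) (w : List C) :
    D.δStar q (c :: w) = D.δStar (D.δ q c) w := rfl

def Reaches (q : D.Q) (x : ℕ → C) : Prop :=
  ∃ k : ℕ, D.δStar q (List.ofFn fun i : Fin k => x i) ∈ D.F

def FinalAbsorbing : Prop :=
  ∀ q ∈ D.F, ∀ c, D.δ q c ∈ D.F

variable {D}

lemma reaches_iff_reaches_δ (hD : D.FinalAbsorbing) (q : D.Q) (x : ℕ → C) :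
    D.Reaches q x ↔ D.Reaches (D.δ q (x 0)) fun k => x (k + 1) := by
  constructor
  · rintro ⟨_ | k, hk⟩
    · exact ⟨0, hD q hk (x 0)⟩
    · exact ⟨k, by rwa [List.ofFn_succ, δStar_cons] at hk⟩
  · rintro ⟨k, hk⟩
    exact ⟨k + 1, by rwa [List.ofFn_succ, δStar_cons]⟩

lemma reaches_wcat (hD : D.FinalAbsorbing) (q : D.Q) (w : List C) (x : ℕ → C) :
    D.Reaches q (wcat w x) ↔ D.Reaches (D.δStar q w) x := by
  induction w generalizing q with
  | nil => rw [wcat_nil, δStar_nil]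
  | cons a w ih => rw [reaches_iff_reaches_δ hD, wcat_cons_zero, wcat_cons_succ, ih, δStar_cons]

lemma mem_contAfter_reachObj_iff (hD : D.FinalAbsorbing) (w : List C) (x : ℕ → C) :
    x ∈ contAfter (ReachObj D.lang) w ↔ D.Reaches (D.δStar D.init w) x :=
  (reaches_wcat hD D.init w x : _)

lemma statePrefLe_of_forall_reaches (hD : D.FinalAbsorbing) {q₁ q₂ : D.Q}
    (h : ∀ x, D.Reaches q₁ x → D.Reaches q₂ x) : statePrefLe D (ReachObj D.lang) q₁ q₂ := by
  rintro w₁ w₂ rfl rfl x hx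
  rw [mem_contAfter_reachObj_iff hD] at hx ⊢
  exact h x hx

lemma reaches_of_statePrefLe (hD : D.FinalAbsorbing) {q₁ q₂ : D.Q} {w₁ w₂ : List C}
    (hw₁ : D.δStar D.init w₁ = q₁) (hw₂ : D.δStar D.init w₂ = q₂)
    (h : statePrefLe D (ReachObj D.lang) q₁ q₂) {x : ℕ → C} (hx : D.Reaches q₁ x) :
    D.Reaches q₂ x := by
  have hle : x ∈ contAfter (ReachObj D.lang) w₁ → x ∈ contAfter (ReachObj D.lang) w₂ :=
    @h w₁ w₂ hw₁ hw₂ x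
  rw [mem_contAfter_reachObj_iff hD, mem_contAfter_reachObj_iff hD, hw₁, hw₂] at hle
  exact hle hx

end DetAuto

lemma exists_equiv_mem_iff_of_antichain {Q ι : Type*} [Fintype ι] {k : ℕ} {r : Q → Q → Prop}
    {Γ : Fin k → Set Q} (hcov : ∀ q, ∃ i, q ∈ Γ i) (hΓ : ∀ i, ∀ q₁ ∈ Γ i, ∀ q₂ ∈ Γ i, r q₁ q₂)
    {a : ι → Q} (ha : Pairwise fun x y => ¬ r (a x) (a y)) (hcard : Fintype.card ι = k) :
    ∃ e : ι ≃ Fin k, ∀ x i, a x ∈ Γ i ↔ e x = i := by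
  choose f hf using fun x => hcov (a x)
  have eq_of_mem {x y : ι} {i : Fin k} (hx : a x ∈ Γ i) (hy : a y ∈ Γ i) : x = y :=
    by_contra fun hne => ha hne (hΓ i _ hx _ hy)
  have hf_inj : Function.Injective f := fun x y hxy => eq_of_mem (hf x) (hxy ▸ hf y)
  have hf_bij : Function.Bijective f :=
    (Fintype.bijective_iff_injective_and_card f).2 ⟨hf_inj, by simpa using hcard⟩
  refine ⟨Equiv.ofBijective f hf_bij, fun x i => ⟨fun hx => ?_, fun h => h ▸ hf x⟩⟩
  obtain ⟨y, rfl⟩ := hf_bij.2 i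
  rw [eq_of_mem hx (hf y)]
  rfl

lemma monotoneDecomposition_comp_equiv {C ι : Type} {D : DetAuto C} {W : Set (ℕ → C)} {k : ℕ}
    (e : Fin k ≃ ι) {Γ : ι → Set D.Q} (hcov : ∀ q, ∃ s, q ∈ Γ s)
    (hstep : ∀ c s, ∃ t, (fun q => D.δ q c) '' Γ s ⊆ Γ t)
    (hchain : ∀ s, ∀ q₁ ∈ Γ s, ∀ q₂ ∈ Γ s, StateComparable D W q₁ q₂) :
    MonotoneDecomposition D W (Γ ∘ e) := by
  refine ⟨fun q => ?_, fun c i => ?_, fun i => hchain (e i)⟩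
  · obtain ⟨s, hs⟩ := hcov q
    exact ⟨e.symm s, by simpa using hs⟩
  · obtain ⟨t, ht⟩ := hstep c (e i)
    exact ⟨e.symm t, by simpa using ht⟩

section DG

variable {n : ℕ} {Ed : Finset (Fin n × Fin n)}

local notation "W_G" => ReachObj (DetAuto.lang (DG _ _))

local notation:50 q₁ " ⪯ " q₂ => statePrefLe (DG _ _) W_G q₁ q₂

local notation "Cmp" => StateComparable (DG _ _) W_G

lemma DG_δStar_cons (q : DGState n Ed) (c : DGAlpha n Ed) (w : List (DGAlpha n Ed)) :
    (DG n Ed).δStar q (c :: w) = (DG n Ed).δStar (DGdelta q c) w := rfl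

lemma DGdelta_top (c : DGAlpha n Ed) : DGdelta .top c = .top := by
  cases c <;> rfl

lemma DGdelta_bot (c : DGAlpha n Ed) : DGdelta .bot c = .bot := by
  cases c <;> rfl

lemma DGdelta_base_az (z z' : ZKind n Ed) : DGdelta (.base z) (.az z') = azTarget z z' := by
  cases z <;> rfl

lemma azTarget_eq_bot_or_top (z z' : ZKind n Ed) : azTarget z z' = .bot ∨ azTarget z z' = .top := by
  cases z <;> cases z' <;> simp only [azTarget] <;> (try split_ifs) <;> simp

lemma DG_finalAbsorbing : (DG n Ed).FinalAbsorbing := by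
  rintro q rfl c
  exact DGdelta_top c

lemma DG_δStar_top (w : List (DGAlpha n Ed)) : (DG n Ed).δStar .top w = .top := by
  induction w with
  | nil => rfl
  | cons c w ih => rwa [DG_δStar_cons, DGdelta_top]

lemma DG_δStar_bot (w : List (DGAlpha n Ed)) : (DG n Ed).δStar .bot w = .bot := by
  induction w with
  | nil => rfl
  | cons c w ih => rwa [DG_δStar_cons, DGdelta_bot]

lemma DG_δStar_azTarget (z z' : ZKind n Ed) (w : List (DGAlpha n Ed)) :
    (DG n Ed).δStar (azTarget z z') w = azTarget z z' := by
  rcases azTarget_eq_bot_or_top z z' with h | h <;> rw [h]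
  exacts [DG_δStar_bot w, DG_δStar_top w]

lemma DG_δStar_base_az (z z' : ZKind n Ed) (w : List (DGAlpha n Ed)) :
    (DG n Ed).δStar (.base z) (.az z' :: w) = azTarget z z' := by
  rw [DG_δStar_cons, DGdelta_base_az, DG_δStar_azTarget]

lemma eq_top_of_DGdelta_inL_eq_top {q : DGState n Ed} (h : DGdelta q .inL = .top) : q = .top := by
  rcases q with ((_ | _ | _ | _) | _ | _ | _) <;> first | rfl | cases h

lemma eq_top_of_DG_δStar_replicate_inL {q : DGState n Ed} {k : ℕ}
    (h : (DG n Ed).δStar q (List.replicate k .inL) = .top) : q = .top := by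
  induction k generalizing q with
  | zero => exact h
  | succ k ih => exact eq_top_of_DGdelta_inL_eq_top (ih h)

lemma reaches_const_inL_iff (q : DGState n Ed) :
    (DG n Ed).Reaches q (fun _ => .inL) ↔ q = .top := by
  refine ⟨fun ⟨k, hk⟩ => eq_top_of_DG_δStar_replicate_inL (k := k) ?_, fun h => ⟨0, h⟩⟩
  rwa [List.ofFn_const] at hk

lemma statePrefLe_of_accepts {q₁ q₂ : DGState n Ed}
    (h : ∀ w, (DG n Ed).δStar q₁ w = .top → (DG n Ed).δStar q₂ w = .top) : q₁ ⪯ q₂ :=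
  DetAuto.statePrefLe_of_forall_reaches DG_finalAbsorbing fun _ ⟨k, hk⟩ => ⟨k, h _ hk⟩

/-- `in` never leads to `⊤`, so `w · in^ω` is winning after `q` iff `w` leads from `q` to `⊤`. -/
lemma not_statePrefLe_of_accepts {q₁ q₂ : DGState n Ed} (w₁ w₂ : List (DGAlpha n Ed))
    (hw₁ : (DG n Ed).δStar .qinit w₁ = q₁) (hw₂ : (DG n Ed).δStar .qinit w₂ = q₂)
    (w : List (DGAlpha n Ed)) (h₁ : (DG n Ed).δStar q₁ w = .top)
    (h₂ : (DG n Ed).δStar q₂ w ≠ .top) : ¬ q₁ ⪯ q₂ := fun hle => h₂ <| by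
  have hreach₁ : (DG n Ed).Reaches q₁ (wcat w fun _ => .inL) :=
    (DetAuto.reaches_wcat DG_finalAbsorbing q₁ w _).2 ((reaches_const_inL_iff _).2 h₁)
  have hreach₂ := DetAuto.reaches_of_statePrefLe DG_finalAbsorbing hw₁ hw₂ hle hreach₁
  exact (reaches_const_inL_iff _).1 ((DetAuto.reaches_wcat DG_finalAbsorbing q₂ w _).1 hreach₂)

lemma azTarget_self (z : ZKind n Ed) : azTarget z z = .top := by
  cases z <;> simp [azTarget]

lemma exists_azTarget_ne_top (z : ZKind n Ed) : ∃ z', azTarget z z' ≠ .top := by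
  cases z with
  | vc i | vg i => exact ⟨.ec i, by simp [azTarget]⟩
  | ec i => exact ⟨.vc i, by simp [azTarget]⟩
  | eg e _ => exact ⟨.vc e.1, by simp [azTarget]⟩

lemma bot_statePrefLe (q : DGState n Ed) : .bot ⪯ q :=
  statePrefLe_of_accepts fun w h => by rw [DG_δStar_bot] at h; cases h

lemma statePrefLe_top (q : DGState n Ed) : q ⪯ .top :=
  statePrefLe_of_accepts fun w _ => DG_δStar_top w

lemma stateComparable_refl (q : DGState n Ed) : Cmp q q :=
  Or.inl (statePrefLe_of_accepts fun _ h => h)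

lemma stateComparable_comm {q₁ q₂ : DGState n Ed} : Cmp q₁ q₂ ↔ Cmp q₂ q₁ :=
  or_comm

lemma accepts_vg_of_accepts_vc (a v : Fin n) :
    ∀ w, (DG n Ed).δStar (.base (.vc a)) w = .top → (DG n Ed).δStar (.base (.vg v)) w = .top
  | [], h => by cases h
  | .inL :: w, h | .outL :: w, h => accepts_vg_of_accepts_vc a v w h
  | .az z :: w, h => by
    rw [DG_δStar_base_az] at h ⊢
    cases z <;> first | rfl | simp [azTarget] at h

lemma accepts_eg_of_accepts_ec (j : Fin n) {e : Fin n × Fin n} (he : e ∈ Ed) :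
    ∀ w, (DG n Ed).δStar (.base (.ec j)) w = .top → (DG n Ed).δStar (.base (.eg e he)) w = .top
  | [], h => by cases h
  | .inL :: w, h => accepts_vg_of_accepts_vc j e.1 w h
  | .outL :: w, h => accepts_vg_of_accepts_vc (finSucc j) e.2 w h
  | .az z :: w, h => by
    rw [DG_δStar_base_az] at h ⊢
    cases z <;> first | rfl | simp [azTarget] at h

lemma vc_statePrefLe_vg (a v : Fin n) : (.base (.vc a) : DGState n Ed) ⪯ .base (.vg v) :=
  statePrefLe_of_accepts (accepts_vg_of_accepts_vc a v)

lemma ec_statePrefLe_eg (j : Fin n) {e : Fin n × Fin n} (he : e ∈ Ed) :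
    .base (.ec j) ⪯ .base (.eg e he) :=
  statePrefLe_of_accepts (accepts_eg_of_accepts_ec j he)

lemma not_base_statePrefLe_base {z₁ z₂ : ZKind n Ed} (h : azTarget z₂ z₁ ≠ .top) :
    ¬ .base z₁ ⪯ .base z₂ :=
  not_statePrefLe_of_accepts [.az z₁] [.az z₂] rfl rfl [.az z₁]
    (by rw [DG_δStar_base_az, azTarget_self]) (by rwa [DG_δStar_base_az])

lemma not_stateComparable_base {z₁ z₂ : ZKind n Ed} (h₁₂ : azTarget z₁ z₂ ≠ .top)
    (h₂₁ : azTarget z₂ z₁ ≠ .top) : ¬ Cmp (.base z₁) (.base z₂) :=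
  not_or.2 ⟨not_base_statePrefLe_base h₂₁, not_base_statePrefLe_base h₁₂⟩

lemma not_stateComparable_base_qinit (z : ZKind n Ed) : ¬ Cmp (.base z) .qinit := by
  obtain ⟨z', hz'⟩ := exists_azTarget_ne_top z
  refine not_or.2 ⟨?_, ?_⟩
  · exact not_statePrefLe_of_accepts [.az z] [] rfl rfl [.az z]
      (by rw [DG_δStar_base_az, azTarget_self]) (fun h => by cases h)
  · exact not_statePrefLe_of_accepts [] [.az z] rfl rfl [.az z', .az z']
      ((DG_δStar_base_az z' z' []).trans (azTarget_self z'))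
      (by rwa [DG_δStar_base_az])

abbrev ChainIndex (n : ℕ) (Ed : Finset (Fin n × Fin n)) : Type := (Fin n ⊕ Ed) ⊕ Unit

lemma card_chainIndex : Fintype.card (ChainIndex n Ed) = n + Ed.card + 1 := by
  simp

def anchor : ChainIndex n Ed → DGState n Ed
  | .inl (.inl a) => .base (.vc a)
  | .inl (.inr e) => .base (.eg e.1 e.2)
  | .inr _ => .qinit

lemma pairwise_not_stateComparable_anchor :
    Pairwise fun x y : ChainIndex n Ed => ¬ Cmp (anchor x) (anchor y) := by
  rintro ((a | e) | _) ((b | e') | _) hne <;> simp only [anchor]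
  all_goals first
    | exact (hne rfl).elim
    | exact not_stateComparable_base_qinit _
    | exact mt stateComparable_comm.1 (not_stateComparable_base_qinit _)
    | exact not_stateComparable_base (by simp_all [azTarget]) (by simp_all [azTarget, eq_comm])

section Backward

variable {Γ : Fin (n + Ed.card + 1) → Set (DGState n Ed)}
  {e : ChainIndex n Ed ≃ Fin (n + Ed.card + 1)}

lemma exists_anchor_equiv (hΓ : MonotoneDecomposition (DG n Ed) W_G Γ) :
    ∃ e : ChainIndex n Ed ≃ Fin (n + Ed.card + 1), ∀ x i, anchor x ∈ Γ i ↔ e x = i :=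
  exists_equiv_mem_iff_of_antichain hΓ.1 hΓ.2.2 pairwise_not_stateComparable_anchor card_chainIndex

lemma stateComparable_anchor_of_mem (hΓ : MonotoneDecomposition (DG n Ed) W_G Γ)
    (he : ∀ x i, anchor x ∈ Γ i ↔ e x = i) {q : DGState n Ed} {i : Fin (n + Ed.card + 1)}
    (hq : q ∈ Γ i) : Cmp (anchor (e.symm i)) q :=
  hΓ.2.2 i _ ((he _ _).2 (e.apply_symm_apply i)) q hq

lemma exists_vg_mem_vertexChain (hΓ : MonotoneDecomposition (DG n Ed) W_G Γ)
    (he : ∀ x i, anchor x ∈ Γ i ↔ e x = i) (v : Fin n) :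
    ∃ a, .base (.vg v) ∈ Γ (e (.inl (.inl a))) := by
  obtain ⟨i, hi⟩ := hΓ.1 (.base (.vg v))
  have hcmp := stateComparable_anchor_of_mem hΓ he hi
  rcases hx : e.symm i with (a | ε) | _ <;> rw [hx] at hcmp
  · exact ⟨a, by rwa [← hx, e.apply_symm_apply]⟩
  · exact absurd hcmp (not_stateComparable_base (by simp [azTarget]) (by simp [azTarget]))
  · exact absurd hcmp (mt stateComparable_comm.1 (not_stateComparable_base_qinit _))

lemma exists_ec_mem_edgeChain (hΓ : MonotoneDecomposition (DG n Ed) W_G Γ)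
    (he : ∀ x i, anchor x ∈ Γ i ↔ e x = i) (j : Fin n) :
    ∃ ε, .base (.ec j) ∈ Γ (e (.inl (.inr ε))) := by
  obtain ⟨i, hi⟩ := hΓ.1 (.base (.ec j))
  have hcmp := stateComparable_anchor_of_mem hΓ he hi
  rcases hx : e.symm i with (a | ε) | _ <;> rw [hx] at hcmp
  · exact absurd hcmp (not_stateComparable_base (by simp [azTarget]) (by simp [azTarget]))
  · exact ⟨ε, by rwa [← hx, e.apply_symm_apply]⟩
  · exact absurd hcmp (mt stateComparable_comm.1 (not_stateComparable_base_qinit _))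

lemma eq_of_vg_mem (hΓ : MonotoneDecomposition (DG n Ed) W_G Γ)
    {v w : Fin n} {i : Fin (n + Ed.card + 1)} (hv : .base (.vg v) ∈ Γ i)
    (hw : .base (.vg w) ∈ Γ i) : v = w :=
  by_contra fun hne => not_stateComparable_base (by simp [azTarget, hne])
    (by simp [azTarget, Ne.symm hne]) (hΓ.2.2 i _ hv _ hw)

lemma exists_vertexLabeling (hΓ : MonotoneDecomposition (DG n Ed) W_G Γ)
    (he : ∀ x i, anchor x ∈ Γ i ↔ e x = i) :
    ∃ u : Fin n ≃ Fin n, ∀ a v, .base (.vg v) ∈ Γ (e (.inl (.inl a))) ↔ v = u a := by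
  choose g hg using exists_vg_mem_vertexChain hΓ he
  have hg_inj : Function.Injective g := fun v w hvw => eq_of_vg_mem hΓ (hg v) (hvw ▸ hg w)
  let g' := Equiv.ofBijective g (Finite.injective_iff_bijective.1 hg_inj)
  have hmem (a : Fin n) : .base (.vg (g'.symm a)) ∈ Γ (e (.inl (.inl a))) := by
    have hga : g (g'.symm a) = a := g'.apply_symm_apply a
    simpa only [hga] using hg (g'.symm a)
  exact ⟨g'.symm, fun a v => ⟨fun hv => eq_of_vg_mem hΓ hv (hmem a), fun h => h ▸ hmem a⟩⟩

lemma eq_of_vc_mem_of_vg_mem (he : ∀ x i, anchor x ∈ Γ i ↔ e x = i) {u : Fin n ≃ Fin n}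
    (hu : ∀ a v, .base (.vg v) ∈ Γ (e (.inl (.inl a))) ↔ v = u a) {a v : Fin n}
    {i : Fin (n + Ed.card + 1)} (ha : .base (.vc a) ∈ Γ i) (hv : .base (.vg v) ∈ Γ i) : v = u a := by
  obtain rfl := (he (.inl (.inl a)) i).1 ha
  exact (hu a v).1 hv

lemma edge_eq_of_ec_mem_of_eg_mem
    (hΓ : MonotoneDecomposition (DG n Ed) W_G Γ)
    (he : ∀ x i, anchor x ∈ Γ i ↔ e x = i) {u : Fin n ≃ Fin n}
    (hu : ∀ a v, .base (.vg v) ∈ Γ (e (.inl (.inl a))) ↔ v = u a) {j : Fin n}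
    {ε : Fin n × Fin n} {hε : ε ∈ Ed} {i : Fin (n + Ed.card + 1)} (hj : .base (.ec j) ∈ Γ i)
    (hε : .base (.eg ε hε) ∈ Γ i) : ε = (u j, u (finSucc j)) := by
  obtain ⟨i₁, h_in⟩ := hΓ.2.1 .inL i
  obtain ⟨i₂, h_out⟩ := hΓ.2.1 .outL i
  refine Prod.ext ?_ ?_
  · exact eq_of_vc_mem_of_vg_mem he hu (h_in ⟨_, hj, rfl⟩) (h_in ⟨_, hε, rfl⟩)
  · exact eq_of_vc_mem_of_vg_mem he hu (h_out ⟨_, hj, rfl⟩) (h_out ⟨_, hε, rfl⟩)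

lemma hasHamiltonianCycle_of_monotoneDecomposition
    (hΓ : MonotoneDecomposition (DG n Ed) W_G Γ) :
    HasHamiltonianCycle n Ed := by
  obtain ⟨e, he⟩ := exists_anchor_equiv hΓ
  obtain ⟨u, hu⟩ := exists_vertexLabeling hΓ he
  refine ⟨u, u.bijective, fun j => ?_⟩
  obtain ⟨ε, hε⟩ := exists_ec_mem_edgeChain hΓ he j
  rw [← edge_eq_of_ec_mem_of_eg_mem hΓ he hu hε ((he (.inl (.inr ε)) _).2 rfl)]
  exact ε.2

end Backward

section Forward

variable (u : Fin n ≃ Fin n)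

def hamChain : ChainIndex n Ed → Set (DGState n Ed)
  | .inl (.inl a) => {.bot, .top, .base (.vc a), .base (.vg (u a))}
  | .inl (.inr ε) =>
    insert .bot <| insert .top <| insert (.base (.eg ε.1 ε.2))
      {q | ∃ j, (u j, u (finSucc j)) = ε.1 ∧ q = .base (.ec j)}
  | .inr _ => {.bot, .top, .qinit}

lemma bot_mem_hamChain (s : ChainIndex n Ed) : .bot ∈ hamChain u s := by
  rcases s with (_ | _) | _ <;> simp [hamChain]

lemma top_mem_hamChain (s : ChainIndex n Ed) : .top ∈ hamChain u s := by
  rcases s with (_ | _) | _ <;> simp [hamChain]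

lemma exists_mem_hamChain (hu : ∀ j, (u j, u (finSucc j)) ∈ Ed) (q : DGState n Ed) :
    ∃ s, q ∈ hamChain u s := by
  rcases q with ((a | j | v | ⟨ε, hε⟩) | _ | _ | _)
  · exact ⟨.inl (.inl a), by simp [hamChain]⟩
  · exact ⟨.inl (.inr ⟨_, hu j⟩), by simp [hamChain]⟩
  · exact ⟨.inl (.inl (u.symm v)), by simp [hamChain]⟩
  · exact ⟨.inl (.inr ⟨ε, hε⟩), by simp [hamChain]⟩
  all_goals exact ⟨.inr (), by simp [hamChain]⟩

lemma DGdelta_az_eq (q : DGState n Ed) (z : ZKind n Ed) :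
    DGdelta q (.az z) = .bot ∨ DGdelta q (.az z) = .top ∨ DGdelta q (.az z) = .base z := by
  rcases q with z' | _ | _ | _
  · rw [DGdelta_base_az]
    rcases azTarget_eq_bot_or_top z' z with h | h <;> simp [h]
  all_goals simp [DGdelta]

lemma exists_image_az_subset_hamChain (hu : ∀ j, (u j, u (finSucc j)) ∈ Ed) (z : ZKind n Ed)
    (s : ChainIndex n Ed) : ∃ t, (fun q => DGdelta q (.az z)) '' hamChain u s ⊆ hamChain u t := by
  obtain ⟨t, ht⟩ := exists_mem_hamChain u hu (.base z)
  refine ⟨t, ?_⟩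
  rintro _ ⟨q, -, rfl⟩
  rcases DGdelta_az_eq q z with h | h | h <;> simp only [h]
  exacts [bot_mem_hamChain u t, top_mem_hamChain u t, ht]

lemma exists_image_inL_subset_hamChain (s : ChainIndex n Ed) :
    ∃ t, (fun q => DGdelta q .inL) '' hamChain u s ⊆ hamChain u t := by
  rcases s with (a | ⟨⟨v₁, v₂⟩, hε⟩) | _
  · refine ⟨.inl (.inl a), ?_⟩
    rintro _ ⟨q, hq, rfl⟩
    rcases hq with rfl | rfl | rfl | rfl <;> simp [hamChain, DGdelta]
  · refine ⟨.inl (.inl (u.symm v₁)), ?_⟩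
    rintro _ ⟨q, rfl | rfl | rfl | ⟨j, hj, rfl⟩, rfl⟩ <;> simp_all [hamChain, DGdelta, Prod.ext_iff, Equiv.eq_symm_apply]
  · refine ⟨.inr (), ?_⟩
    rintro _ ⟨q, hq, rfl⟩
    rcases hq with rfl | rfl | rfl <;> simp [hamChain, DGdelta]

lemma exists_image_outL_subset_hamChain (s : ChainIndex n Ed) :
    ∃ t, (fun q => DGdelta q .outL) '' hamChain u s ⊆ hamChain u t := by
  rcases s with (a | ⟨⟨v₁, v₂⟩, hε⟩) | _
  · refine ⟨.inl (.inl a), ?_⟩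
    rintro _ ⟨q, hq, rfl⟩
    rcases hq with rfl | rfl | rfl | rfl <;> simp [hamChain, DGdelta]
  · refine ⟨.inl (.inl (u.symm v₂)), ?_⟩
    rintro _ ⟨q, rfl | rfl | rfl | ⟨j, hj, rfl⟩, rfl⟩ <;> simp_all [hamChain, DGdelta, Prod.ext_iff, Equiv.eq_symm_apply]
  · refine ⟨.inr (), ?_⟩
    rintro _ ⟨q, hq, rfl⟩
    rcases hq with rfl | rfl | rfl <;> simp [hamChain, DGdelta]

lemma stateComparable_of_mem_insert_bot_top {S : Set (DGState n Ed)}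
    (hS : ∀ q₁ ∈ S, ∀ q₂ ∈ S, Cmp q₁ q₂) :
    ∀ q₁ ∈ insert .bot (insert .top S), ∀ q₂ ∈ insert .bot (insert .top S), Cmp q₁ q₂ := by
  rintro q₁ (rfl | rfl | h₁) q₂ (rfl | rfl | h₂)
  all_goals first
    | exact Or.inl (bot_statePrefLe _)
    | exact Or.inr (bot_statePrefLe _)
    | exact Or.inl (statePrefLe_top _)
    | exact Or.inr (statePrefLe_top _)
    | exact hS _ h₁ _ h₂

lemma stateComparable_of_mem_hamChain (s : ChainIndex n Ed) :
    ∀ q₁ ∈ hamChain u s, ∀ q₂ ∈ hamChain u s, Cmp q₁ q₂ := by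
  rcases s with (a | ⟨ε, hε⟩) | _
  · refine stateComparable_of_mem_insert_bot_top ?_
    rintro q₁ (rfl | rfl) q₂ (rfl | rfl)
    exacts [stateComparable_refl _, Or.inl (vc_statePrefLe_vg _ _), Or.inr (vc_statePrefLe_vg _ _),
      stateComparable_refl _]
  · refine stateComparable_of_mem_insert_bot_top ?_
    rintro q₁ (rfl | ⟨j₁, hj₁, rfl⟩) q₂ (rfl | ⟨j₂, hj₂, rfl⟩)
    · exact stateComparable_refl _
    · exact Or.inr (ec_statePrefLe_eg _ _)
    · exact Or.inl (ec_statePrefLe_eg _ _)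
    · obtain rfl : j₁ = j₂ := u.injective (congrArg Prod.fst (hj₁.trans hj₂.symm))
      exact stateComparable_refl _
  · refine stateComparable_of_mem_insert_bot_top ?_
    rintro q₁ rfl q₂ rfl
    exact stateComparable_refl _

lemma exists_monotoneDecomposition_of_hasHamiltonianCycle (h : HasHamiltonianCycle n Ed) :
    ∃ Γ : Fin (n + Ed.card + 1) → Set (DG n Ed).Q,
      MonotoneDecomposition (DG n Ed) W_G Γ := by
  obtain ⟨u, hu_bij, hu⟩ := h
  let u' := Equiv.ofBijective u hu_bij
  refine ⟨_, monotoneDecomposition_comp_equiv (Fintype.equivFinOfCardEq card_chainIndex).symm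
    (exists_mem_hamChain u' hu) (fun c s => ?_) (stateComparable_of_mem_hamChain u')⟩
  rcases c with _ | _ | z
  exacts [exists_image_inL_subset_hamChain u' s, exists_image_outL_subset_hamChain u' s,
    exists_image_az_subset_hamChain u' hu z s]

end Forward

end DG

theorem hamiltonianCycle_iff_monotoneDecomposition_general
    (n : ℕ)
    (Ed : Finset (Fin n × Fin n)) :
    HasHamiltonianCycle n Ed ↔
      ∃ Γ : Fin (n + Ed.card + 1) → Set (DG n Ed).Q,
        MonotoneDecomposition (DG n Ed) (ReachObj (DG n Ed).lang) Γ :=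
  ⟨exists_monotoneDecomposition_of_hasHamiltonianCycle,
    fun ⟨_, hΓ⟩ => hasHamiltonianCycle_of_monotoneDecomposition hΓ⟩

/-- `G` has a Hamiltonian cycle iff `D_G` admits a monotone
decomposition with `n + m + 1` sets. -/
theorem hamiltonianCycle_iff_monotoneDecomposition
    (n : ℕ) (hn : 1 ≤ n)
    (Ed : Finset (Fin n × Fin n)) (hm : n ≤ Ed.card) :
    HasHamiltonianCycle n Ed ↔
      ∃ Γ : Fin (n + Ed.card + 1) → Set (DG n Ed).Q,
        MonotoneDecomposition (DG n Ed) (ReachObj (DG n Ed).lang) Γ :=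
  hamiltonianCycle_iff_monotoneDecomposition_general n Ed

end RegularMemory
end

section
/- Let C = {a, b} and let W ⊆ C^ω be the set of infinite words containing infinitely many occurrences of a and infinitely many occurrences of b. Then W is M_triv-strongly-monotone and M_triv-progress-consistent, but M_triv does not suffice to play optimally for W: there is a finite one-player arena of Player 1 in which Player 1 has a winning strategy from some vertex but no optimal strategy based on M_triv (i.e., no memoryless optimal strategy). -/
set_option autoImplicit false

namespace RegularMemory

/-- The objective over `C = {a, b}` (encoded as `Bool`, with `a = true` and
`b = false`): both letters are seen infinitely often. -/
def InfBoth : Set (ℕ → Bool) :=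
  {x | (∀ N : ℕ, ∃ n : ℕ, N ≤ n ∧ x n = true) ∧ (∀ N : ℕ, ∃ n : ℕ, N ≤ n ∧ x n = false)}

/-!
Both letters occurring infinitely often is a prefix-independent property, so all finite words
are equivalent for the prefix preorder: strong monotonicity holds and progress consistency is
vacuous. On one vertex with an `a`-loop and a `b`-loop, alternating the loops wins, whereas a
memoryless strategy repeats a single loop forever and loses.
-/

def PrefixIndependent {C : Type} (W : Set (ℕ → C)) : Prop :=
  ∀ (w : List C) (x : ℕ → C), wcat w x ∈ W ↔ x ∈ W

section PrefixIndependent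

variable {C : Type} {W : Set (ℕ → C)}

theorem PrefixIndependent.prefLe (hW : PrefixIndependent W) (w₁ w₂ : List C) :
    prefLe W w₁ w₂ :=
  fun x hx => (hW w₂ x).2 ((hW w₁ x).1 hx)

theorem PrefixIndependent.not_prefLt (hW : PrefixIndependent W) (w₁ w₂ : List C) :
    ¬ prefLt W w₁ w₂ :=
  fun h => h.2 (hW.prefLe w₂ w₁)

theorem PrefixIndependent.stronglyMonotone (hW : PrefixIndependent W) (N : MemStruct C) :
    StronglyMonotone N W :=
  fun w₁ w₂ _ => Or.inl (hW.prefLe w₁ w₂)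

theorem PrefixIndependent.progressConsistent [Nonempty C] (hW : PrefixIndependent W)
    (N : MemStruct C) : ProgressConsistent N W :=
  fun _ w₁ w₂ _ _ hlt => absurd hlt (hW.not_prefLt w₁ (w₁ ++ w₂))

end PrefixIndependent

theorem wcat_of_length_le {C : Type} (w : List C) (x : ℕ → C) {n : ℕ} (h : w.length ≤ n) :
    wcat w x n = x (n - w.length) :=
  dif_neg (by omega)

theorem infinitelyOften_wcat_iff {C : Type} (p : C → Prop) (w : List C) (x : ℕ → C) :
    (∀ N, ∃ n, N ≤ n ∧ p (wcat w x n)) ↔ ∀ N, ∃ n, N ≤ n ∧ p (x n) := by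
  constructor
  · intro h N
    obtain ⟨n, hn, hp⟩ := h (N + w.length)
    rw [wcat_of_length_le w x (by omega)] at hp
    exact ⟨n - w.length, by omega, hp⟩
  · intro h N
    obtain ⟨n, hn, hp⟩ := h N
    refine ⟨n + w.length, by omega, ?_⟩
    rwa [wcat_of_length_le w x (by omega), Nat.add_sub_cancel]

theorem prefixIndependent_infBoth : PrefixIndependent InfBoth := fun w x =>
  and_congr (infinitelyOften_wcat_iff (· = true) w x) (infinitelyOften_wcat_iff (· = false) w x)

theorem const_not_mem_infBoth (c : Bool) : (fun _ => c) ∉ InfBoth :=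
  fun ⟨hTrue, hFalse⟩ => by
    obtain ⟨_, _, rfl⟩ := hTrue 0
    obtain ⟨_, _, h⟩ := hFalse 0
    exact Bool.noConfusion h

def loopArena : Arena Bool where
  V := Unit
  P1 := fun _ => True
  E := Set.univ
  succ := fun v _ => ⟨(v, true, v), Set.mem_univ _, rfl⟩

namespace loopArena

theorem isFinite : loopArena.IsFinite :=
  ⟨inferInstanceAs (Finite Unit), Set.finite_univ (α := Unit × Bool × Unit)⟩

theorem oneP1 : loopArena.OneP1 := fun _ => trivial

theorem histFrom (v : loopArena.V) (l : List (loopArena.V × Bool × loopArena.V)) :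
    loopArena.HistFrom v l := by
  induction l generalizing v with
  | nil => trivial
  | cons e l ih => exact ⟨Set.mem_univ _, rfl, ih _⟩

def alternating : loopArena.Strategy where
  next := fun _ l => ((), decide (l.length % 2 = 0), ())
  legal := fun _ _ _ _ => ⟨Set.mem_univ _, rfl⟩

theorem alternating_winningFrom : alternating.WinningFrom InfBoth () := by
  intro π _ hcons
  have hcol : ∀ n, Arena.playCol π n = decide (n % 2 = 0) := fun n => by
    simp [Arena.playCol, hcons n trivial, alternating]
  refine ⟨fun N => ⟨2 * N, by omega, ?_⟩, fun N => ⟨2 * N + 1, by omega, ?_⟩⟩ <;>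
    simp [hcol, Nat.mul_mod_right, Nat.add_mod]

theorem not_winningFrom_of_basedOn_trivMem {σ : loopArena.Strategy}
    (hσ : σ.BasedOn (trivMem Bool)) : ¬ σ.WinningFrom InfBoth () := by
  obtain ⟨nxt, hnxt⟩ := hσ
  let π : ℕ → loopArena.V × Bool × loopArena.V := fun _ => nxt () ()
  have hplay : loopArena.PlayFrom () π := ⟨rfl, fun _ => ⟨Set.mem_univ _, rfl⟩⟩
  have hcons : σ.Consistent () π := fun n _ => (hnxt () _ (histFrom () _) trivial).symm
  exact fun hwin => const_not_mem_infBoth (nxt () ()).2.1 (hwin π hplay hcons)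

end loopArena

/-- `InfBoth` is `M_triv`-strongly-monotone and
`M_triv`-progress-consistent, yet `M_triv` does not suffice to play optimally:
there is a finite one-player arena of Player 1 where Player 1 can win from some
vertex but has no optimal strategy based on `M_triv`. -/
theorem buchi_objective_counterexample :
    StronglyMonotone (trivMem Bool) InfBoth ∧
    ProgressConsistent (trivMem Bool) InfBoth ∧
    ∃ A : Arena Bool, A.IsFinite ∧ A.OneP1 ∧
      (∃ v : A.V, ∃ σ : A.Strategy, σ.WinningFrom InfBoth v) ∧
      ¬ ∃ σ : A.Strategy, σ.BasedOn (trivMem Bool) ∧ σ.Optimal InfBoth := by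
  refine ⟨prefixIndependent_infBoth.stronglyMonotone _,
    prefixIndependent_infBoth.progressConsistent _, loopArena, loopArena.isFinite,
    loopArena.oneP1, ⟨(), _, loopArena.alternating_winningFrom⟩, ?_⟩
  rintro ⟨σ, hσ, hopt⟩
  exact loopArena.not_winningFrom_of_basedOn_trivMem hσ
    (hopt () ⟨_, loopArena.alternating_winningFrom⟩)

end RegularMemory
end

section
/- Let C = ℕ and let W = {c₁c₂c₃… ∈ ℕ^ω : ∃ i < j, c_i ≥ c_j} be the set of infinite sequences of natural numbers that are not strictly increasing. Then: (i) W is M_triv-strongly-monotone, i.e., the prefix preorder ⪯_W is total on finite words; (ii) W is M_triv-progress-consistent; and (iii) the prefix preorder ⪯_W is well-founded. -/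
set_option autoImplicit false

namespace RegularMemory

/-- The general reachability objective over `C = ℕ` of infinite sequences that are
not strictly increasing. -/
def NotStrictlyIncreasing : Set (ℕ → ℕ) :=
  {x | ∃ i j : ℕ, i < j ∧ x j ≤ x i}

/-!
A finite word `w` affects the objective only through one number: if `w` is not strictly
increasing then every continuation wins, and otherwise a continuation `x` wins iff `x` itself
is not strictly increasing or some letter of `x` is at most `max w`. Ranking words by
`⊥ < max w < ⊤` (with `⊥` for the empty word and `⊤` for the words that are not strictly
increasing) is therefore monotone for the prefix preorder, and the rank lives in a well-order.
Progress consistency holds because `w₁ (w₂)^ω` repeats the first letter of `w₂`.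
-/

section Rank

variable {C α : Type} [LinearOrder α] {W : Set (ℕ → C)} {f : List C → α}

theorem prefComparable_of_rank (hf : ∀ w₁ w₂, f w₁ ≤ f w₂ → prefLe W w₁ w₂)
    (w₁ w₂ : List C) : PrefComparable W w₁ w₂ :=
  (le_total (f w₁) (f w₂)).imp (hf _ _) (hf _ _)

theorem prefWellFounded_of_rank [WellFoundedLT α]
    (hf : ∀ w₁ w₂, f w₁ ≤ f w₂ → prefLe W w₁ w₂) : PrefWellFounded W := by
  intro S hS _
  obtain ⟨_, ⟨w₀, hw₀, rfl⟩, hmin⟩ := wellFounded_lt.has_min (f '' S) (hS.image f)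
  exact ⟨w₀, hw₀, fun w hw hlt => hlt.2 (hf _ _ (not_lt.1 (hmin _ ⟨w, hw, rfl⟩)))⟩

end Rank

theorem prefLt_irrefl {C : Type} (W : Set (ℕ → C)) (w : List C) : ¬ prefLt W w w :=
  fun h => h.2 h.1

section Concat

variable {C : Type} (w : List C) (x : ℕ → C)

theorem wcat_of_lt {n : ℕ} (h : n < w.length) : wcat w x n = w[n] := dif_pos h

theorem wcat_of_le {n : ℕ} (h : w.length ≤ n) : wcat w x n = x (n - w.length) :=
  dif_neg (not_lt.2 h)

theorem wcat_add_length (n : ℕ) : wcat w x (n + w.length) = x n := by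
  rw [wcat_of_le w x (Nat.le_add_left _ _), Nat.add_sub_cancel]

theorem wpow_add_length [Nonempty C] (n : ℕ) : wpow w (n + w.length) = wpow w n := by
  cases w with
  | nil => rfl
  | cons a l => simp only [wpow, Nat.add_mod_right]

end Concat

theorem periodic_mem_notStrictlyIncreasing {x : ℕ → ℕ} {p : ℕ} (hp : 0 < p)
    (hx : ∀ n, x (n + p) = x n) : x ∈ NotStrictlyIncreasing :=
  ⟨0, 0 + p, by omega, (hx 0).le⟩

theorem wcat_mem_notStrictlyIncreasing_iff (w : List ℕ) (x : ℕ → ℕ) :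
    wcat w x ∈ NotStrictlyIncreasing ↔
      ¬ w.Pairwise (· < ·) ∨ (∃ j, (x j : WithBot ℕ) ≤ w.maximum) ∨
        x ∈ NotStrictlyIncreasing := by
  constructor
  · rintro ⟨i, j, hij, hle⟩
    by_cases hj : j < w.length
    · refine Or.inl fun hw => ?_
      rw [wcat_of_lt w x hj, wcat_of_lt w x (hij.trans hj)] at hle
      exact hle.not_gt (List.pairwise_iff_getElem.1 hw i j (hij.trans hj) hj hij)
    by_cases hi : i < w.length
    · rw [wcat_of_lt w x hi, wcat_of_le w x (not_lt.1 hj)] at hle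
      exact Or.inr (Or.inl ⟨_, (WithBot.coe_le_coe.2 hle).trans
        (List.le_maximum_of_mem' (List.getElem_mem hi))⟩)
    · rw [wcat_of_le w x (not_lt.1 hj), wcat_of_le w x (not_lt.1 hi)] at hle
      exact Or.inr (Or.inr ⟨_, _, by omega, hle⟩)
  · rintro (hw | ⟨j, hj⟩ | ⟨i, j, hij, hle⟩)
    · rw [List.pairwise_iff_getElem] at hw
      push Not at hw
      obtain ⟨i, j, hi, hj, hij, hle⟩ := hw
      exact ⟨i, j, hij, by rwa [wcat_of_lt w x hi, wcat_of_lt w x hj]⟩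
    · cases hmax : w.maximum with
      | bot => simp [hmax] at hj
      | coe m =>
        obtain ⟨k, hk, rfl⟩ := List.getElem_of_mem (List.maximum_mem hmax)
        refine ⟨k, j + w.length, by omega, ?_⟩
        rw [wcat_add_length, wcat_of_lt w x hk]
        exact WithBot.coe_le_coe.1 (hmax ▸ hj)
    · exact ⟨i + w.length, j + w.length, by omega, by rwa [wcat_add_length, wcat_add_length]⟩

def nsiRank (w : List ℕ) : WithTop (WithBot ℕ) :=
  if w.Pairwise (· < ·) then w.maximum else ⊤

theorem prefLe_of_nsiRank_le {w₁ w₂ : List ℕ} (h : nsiRank w₁ ≤ nsiRank w₂) :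
    prefLe NotStrictlyIncreasing w₁ w₂ := by
  intro x hx
  simp only [contAfter, Set.mem_ofPred_eq, wcat_mem_notStrictlyIncreasing_iff] at hx ⊢
  by_cases h₂ : w₂.Pairwise (· < ·)
  · by_cases h₁ : w₁.Pairwise (· < ·)
    · have hmax : w₁.maximum ≤ w₂.maximum := by simpa [nsiRank, h₁, h₂] using h
      rcases hx with hx | ⟨j, hj⟩ | hx
      · exact absurd h₁ hx
      · exact Or.inr (Or.inl ⟨j, hj.trans hmax⟩)
      · exact Or.inr (Or.inr hx)
    · simp [nsiRank, h₁, h₂] at h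
  · exact Or.inl h₂

/-- this objective is `M_triv`-strongly-monotone (its prefix preorder
is total), `M_triv`-progress-consistent, and its prefix preorder is well-founded. -/
theorem notStrictlyIncreasing_properties :
    (∀ w₁ w₂ : List ℕ, PrefComparable NotStrictlyIncreasing w₁ w₂) ∧
    ProgressConsistent (trivMem ℕ) NotStrictlyIncreasing ∧
    PrefWellFounded NotStrictlyIncreasing := by
  refine ⟨prefComparable_of_rank fun _ _ => prefLe_of_nsiRank_le, ?_,
    prefWellFounded_of_rank fun _ _ => prefLe_of_nsiRank_le⟩
  rintro _ w₁ (_ | ⟨a, l⟩) _ _ hlt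
  · exact absurd (List.append_nil w₁ ▸ hlt) (prefLt_irrefl _ _)
  · have hper := periodic_mem_notStrictlyIncreasing (Nat.succ_pos l.length)
      (wpow_add_length (a :: l))
    exact (wcat_mem_notStrictlyIncreasing_iff w₁ _).2 (Or.inr (Or.inr hper))

end RegularMemory
end
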